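/- Let H be a rigid pseudogroup on a finite set X with maximal element set Λ, and suppose H is the pseudogroup generated by a permutoid (Π; X). Then the map sending each p ∈ Π to its unique maximal extension in H, together with the identity on X, is an extension of permutoids (Π; X) → (Λ; X). -/

import Mathlib

/-- The identity partial permutation of `X`, represented as a graph (a set of pairs). -/
def pid (X : Type*) : Set (X × X) := {xy | xy.1 = xy.2}

/-- The composition `p·q` of two partial permutations (graphs): first apply `q`, then `p`. -/
def pcomp {X : Type*} (p q : Set (X × X)) : Set (X × X) :=
  {xz | ∃ y, (xz.1, y) ∈ q ∧ (y, xz.2) ∈ p}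

/-- The domain of a partial permutation represented as a graph. -/
def pdom {X : Type*} (p : Set (X × X)) : Set X := {x | ∃ y, (x, y) ∈ p}

/-- The range of a partial permutation represented as a graph. -/
def pran {X : Type*} (p : Set (X × X)) : Set X := {y | ∃ x, (x, y) ∈ p}

/-- The inverse of a partial permutation represented as a graph. -/
def pinv {X : Type*} (p : Set (X × X)) : Set (X × X) := {xy | (xy.2, xy.1) ∈ p}

/-- `p` is the graph of a partial permutation: a bijection between two subsets of `X`. -/
def IsPartialPerm {X : Type*} (p : Set (X × X)) : Prop :=
  (∀ x y y', (x, y) ∈ p → (x, y') ∈ p → y = y') ∧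
  (∀ x x' y, (x, y) ∈ p → (x', y) ∈ p → x = x')

/-- A permutoid on `X`: a set of partial permutations (with nonempty domains) of `X`,
containing the identity of `X`, such that any (defined, i.e. nonempty) partial composition
of two members has at most one extension in the set.  Here `q` extends `p` iff `p ⊆ q`
as graphs. -/
structure IsPermutoid {X : Type*} (S : Set (Set (X × X))) : Prop where
  partialPerm : ∀ p ∈ S, IsPartialPerm p
  nonempty : ∀ p ∈ S, p.Nonempty
  id_mem : pid X ∈ S
  unique_ext : ∀ p ∈ S, ∀ q ∈ S, ∀ r ∈ S, ∀ r' ∈ S,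
    (pcomp p q).Nonempty → pcomp p q ⊆ r → pcomp p q ⊆ r' → r = r'

/-- A morphism of permutoids `(φ, Φ) : (S; X) → (S'; X')`. -/
structure IsPermutoidHom {X X' : Type*} (S : Set (Set (X × X))) (S' : Set (Set (X' × X')))
    (φ : Set (X × X) → Set (X' × X')) (Φ : X → X') : Prop where
  maps : ∀ p ∈ S, φ p ∈ S'
  map_id : φ (pid X) = pid X'
  map_rel : ∀ p ∈ S, ∀ x y, (x, y) ∈ p → (Φ x, Φ y) ∈ φ p
  map_comp : ∀ p ∈ S, ∀ q ∈ S, ∀ r ∈ S, (pcomp p q).Nonempty → pcomp p q ⊆ r →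
    pcomp (φ p) (φ q) ⊆ φ r

/-- The permutoid is complete: all its elements are (graphs of) full permutations of `X`. -/
def IsCompletePermutoid {X : Type*} (S : Set (Set (X × X))) : Prop :=
  ∀ p ∈ S, pdom p = Set.univ ∧ pran p = Set.univ

/-- The relators of the universal group of a permutoid: `p q = r` whenever `r ∈ S` extends
the (defined) composition `p·q`. -/
def permutoidRels {X : Type*} (S : Set (Set (X × X))) : Set (FreeGroup ↥S) :=
  {w | ∃ p q r : ↥S, (pcomp p.1 q.1).Nonempty ∧ pcomp p.1 q.1 ⊆ r.1 ∧
    w = FreeGroup.of p * FreeGroup.of q * (FreeGroup.of r)⁻¹}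

/-- The universal group `Γ(S; X)` of a permutoid. -/
abbrev UniversalGroup {X : Type*} (S : Set (Set (X × X))) : Type _ :=
  PresentedGroup (permutoidRels S)

/-- A finite permutoid is developable if it admits a complete finite extension. -/
def Developable {X : Type*} (S : Set (Set (X × X))) : Prop :=
  ∃ (Y : Type) (S' : Set (Set (Y × Y))) (φ : Set (X × X) → Set (Y × Y)) (Φ : X → Y),
    Finite Y ∧ IsPermutoid S' ∧ IsPermutoidHom S S' φ Φ ∧ Function.Injective Φ ∧
    IsCompletePermutoid S'
/-- A pseudogroup of partial bijections of a (finite, discrete) set `X`, with partial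
bijections represented as graphs. -/
structure IsPseudogroup {X : Type*} (H : Set (Set (X × X))) : Prop where
  partialPerm : ∀ h ∈ H, IsPartialPerm h
  id_mem : pid X ∈ H
  inv_mem : ∀ h ∈ H, pinv h ∈ H
  comp_mem : ∀ h ∈ H, ∀ h' ∈ H, pcomp h h' ∈ H
  restr_mem : ∀ h ∈ H, ∀ U : Set X, {xy ∈ h | xy.1 ∈ U} ∈ H
  union_mem : ∀ h ∈ H, ∀ h' ∈ H, IsPartialPerm (h ∪ h') → h ∪ h' ∈ H

/-- A pseudogroup is rigid if whenever two of its elements agree at a point, their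
union also belongs to the pseudogroup. -/
def IsRigidPseudogroup {X : Type*} (H : Set (Set (X × X))) : Prop :=
  IsPseudogroup H ∧ ∀ f ∈ H, ∀ g ∈ H, (f ∩ g).Nonempty → f ∪ g ∈ H

/-- The set of maximal elements of a set of partial permutations. -/
def maxElts {X : Type*} (H : Set (Set (X × X))) : Set (Set (X × X)) :=
  {h ∈ H | ∀ h' ∈ H, h ⊆ h' → h' = h}

/-- The pseudogroup generated by a set of partial permutations: the smallest pseudogroup
containing it (in particular containing all restrictions of its elements). -/
def genPseudogroup {X : Type*} (S : Set (Set (X × X))) : Set (Set (X × X)) :=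
  ⋂₀ {H | IsPseudogroup H ∧ S ⊆ H}

/-- A permutoid is rigid if distinct elements never agree at any point. -/
def IsRigidPermutoid {X : Type*} (S : Set (Set (X × X))) : Prop :=
  IsPermutoid S ∧ ∀ p ∈ S, ∀ q ∈ S, p ≠ q → ∀ a : X × X, a ∈ p → a ∉ q

/-!
On a finite set every element of `H` lies below a maximal one, and rigidity makes this maximal
extension unique for nonempty elements: two maximal elements sharing a point have their union
in `H`, so both equal it. For the composition law, the composite `φ p · φ q` lies in `H`; its
maximal extension and `φ r` both contain the nonempty composite `p · q ⊆ r`, hence coincide.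
-/

theorem subset_genPseudogroup {X : Type*} (S : Set (Set (X × X))) : S ⊆ genPseudogroup S :=
  fun _ hp _ hH => hH.2 hp

theorem pcomp_mono {X : Type*} {p p' q q' : Set (X × X)} (hp : p ⊆ p') (hq : q ⊆ q') :
    pcomp p q ⊆ pcomp p' q' :=
  fun _ ⟨y, hy₁, hy₂⟩ => ⟨y, hq hy₁, hp hy₂⟩

/-- The union of all maximal elements of `H` extending `p`: the maximal extension of `p` when
it is unique. -/
def maxExt {X : Type*} (H : Set (Set (X × X))) (p : Set (X × X)) : Set (X × X) :=
  ⋃₀ {m | m ∈ maxElts H ∧ p ⊆ m}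

section

variable {X : Type*} {H : Set (Set (X × X))}

theorem exists_mem_maxElts_superset [Finite X] {h : Set (X × X)} (hh : h ∈ H) :
    ∃ m ∈ maxElts H, h ⊆ m := by
  obtain ⟨m, ⟨hmH, hhm⟩, hmax⟩ :=
    (Set.toFinite (H ∩ {h' | h ⊆ h'})).exists_maximalFor id _ ⟨h, hh, Set.Subset.rfl⟩
  exact ⟨m, ⟨hmH, fun h' hh' hmh' => (hmax ⟨hh', hhm.trans hmh'⟩ hmh').antisymm hmh'⟩, hhm⟩

theorem IsPseudogroup.pid_mem_maxElts (hH : IsPseudogroup H) : pid X ∈ maxElts H := by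
  refine ⟨hH.id_mem, fun h hh hpid => Set.Subset.antisymm ?_ hpid⟩
  rintro ⟨x, y⟩ hxy
  exact ((hH.partialPerm h hh).1 x y x hxy (hpid rfl)).symm

theorem IsRigidPseudogroup.eq_of_subset_maxElts (hH : IsRigidPseudogroup H)
    {h m m' : Set (X × X)} (hne : h.Nonempty) (hm : m ∈ maxElts H) (hm' : m' ∈ maxElts H)
    (hhm : h ⊆ m) (hhm' : h ⊆ m') : m = m' := by
  obtain ⟨a, ha⟩ := hne
  have hunion : m ∪ m' ∈ H := hH.2 m hm.1 m' hm'.1 ⟨a, hhm ha, hhm' ha⟩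
  exact (hm.2 _ hunion Set.subset_union_left).symm.trans (hm'.2 _ hunion Set.subset_union_right)

theorem IsRigidPseudogroup.maxExt_eq (hH : IsRigidPseudogroup H) {p m : Set (X × X)}
    (hne : p.Nonempty) (hm : m ∈ maxElts H) (hpm : p ⊆ m) : maxExt H p = m := by
  have hsingleton : {m' | m' ∈ maxElts H ∧ p ⊆ m'} = {m} :=
    Set.eq_singleton_iff_unique_mem.2
      ⟨⟨hm, hpm⟩, fun m' ⟨hm', hpm'⟩ => hH.eq_of_subset_maxElts hne hm' hm hpm' hpm⟩
  rw [maxExt, hsingleton, Set.sUnion_singleton]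

theorem IsRigidPseudogroup.maxExt_mem_maxElts [Finite X] (hH : IsRigidPseudogroup H)
    {p : Set (X × X)} (hp : p ∈ H) (hne : p.Nonempty) : maxExt H p ∈ maxElts H := by
  obtain ⟨m, hm, hpm⟩ := exists_mem_maxElts_superset hp
  rwa [hH.maxExt_eq hne hm hpm]

theorem IsRigidPseudogroup.subset_maxExt [Finite X] (hH : IsRigidPseudogroup H)
    {p : Set (X × X)} (hp : p ∈ H) (hne : p.Nonempty) : p ⊆ maxExt H p := by
  obtain ⟨m, hm, hpm⟩ := exists_mem_maxElts_superset hp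
  rwa [hH.maxExt_eq hne hm hpm]

theorem IsRigidPseudogroup.pcomp_maxExt_subset [Finite X] (hH : IsRigidPseudogroup H)
    {p q r : Set (X × X)} (hp : p ∈ H) (hq : q ∈ H) (hr : r ∈ H) (hne : (pcomp p q).Nonempty)
    (hpqr : pcomp p q ⊆ r) : pcomp (maxExt H p) (maxExt H q) ⊆ maxExt H r := by
  obtain ⟨_, y, hxy, hyz⟩ := id hne
  have hpne : p.Nonempty := ⟨_, hyz⟩
  have hqne : q.Nonempty := ⟨_, hxy⟩
  have hrne : r.Nonempty := ⟨_, hpqr ⟨y, hxy, hyz⟩⟩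
  have hcomp : pcomp (maxExt H p) (maxExt H q) ∈ H :=
    hH.1.comp_mem _ (hH.maxExt_mem_maxElts hp hpne).1 _ (hH.maxExt_mem_maxElts hq hqne).1
  obtain ⟨m, hm, hcm⟩ := exists_mem_maxElts_superset hcomp
  have hpqm : pcomp p q ⊆ m :=
    (pcomp_mono (hH.subset_maxExt hp hpne) (hH.subset_maxExt hq hqne)).trans hcm
  rwa [hH.eq_of_subset_maxElts hne hm (hH.maxExt_mem_maxElts hr hrne) hpqm
    (hpqr.trans (hH.subset_maxExt hr hrne))] at hcm

end

/-- If a rigid pseudogroup `H` on a finite set `X` is generated by a permutoid `(S; X)`,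
then the map sending each `p ∈ S` to its (unique) maximal extension in `H`, together with
the identity map of `X`, is an extension of permutoids `(S; X) → (Λ; X)`, where `Λ` is the
set of maximal elements of `H`. -/
theorem permutoid_to_maxElts_extension {X : Type*} [Finite X]
    {S H : Set (Set (X × X))} (hS : IsPermutoid S)
    (hH : IsRigidPseudogroup H) (hgen : H = genPseudogroup S) :
    ∃ φ : Set (X × X) → Set (X × X),
      IsPermutoidHom S (maxElts H) φ (id : X → X) ∧
      Function.Injective (id : X → X) ∧
      ∀ p ∈ S, p ⊆ φ p ∧ φ p ∈ maxElts H := by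
  have hSH : S ⊆ H := hgen ▸ subset_genPseudogroup S
  have hmax : ∀ p ∈ S, maxExt H p ∈ maxElts H :=
    fun p hp => hH.maxExt_mem_maxElts (hSH hp) (hS.nonempty p hp)
  have hsub : ∀ p ∈ S, p ⊆ maxExt H p :=
    fun p hp => hH.subset_maxExt (hSH hp) (hS.nonempty p hp)
  have hid : maxExt H (pid X) = pid X :=
    hH.maxExt_eq (hS.nonempty _ hS.id_mem) hH.1.pid_mem_maxElts subset_rfl
  refine ⟨maxExt H, ⟨hmax, hid, fun p hp _ _ hxy => hsub p hp hxy, ?_⟩,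
    Function.injective_id, fun p hp => ⟨hsub p hp, hmax p hp⟩⟩
  exact fun p hp q hq r hr hne hpqr =>
    hH.pcomp_maxExt_subset (hSH hp) (hSH hq) (hSH hr) hne hpqr
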